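/- arXiv:1212.5710 — 2 statements merged into one kernel-verified Lean document; each statement's English description precedes it below -/
import Mathlib

section
/- Let V : ℝ × ℝⁿ → ℝ be smooth such that for every multi-index α with |α| ≥ 1 there exists C_α with |∂_x^α V(t,x)| ≤ C_α. Let (f(s;t,x,ξ), g(s;t,x,ξ)) solve f' = g, g' = −∇_x V(s,f) with f(t) = x, g(t) = ξ. Then there exists a constant C₁ > 0 (depending only on n and the bound on ∇_x V) such that for all y, x, ξ ∈ ℝⁿ and all s, t ∈ ℝ, ⟨y − x + (t−s)ξ⟩ ≤ C₁ (1 + |t−s|²) ⟨y − f(s;t,x,ξ)⟩, where ⟨z⟩ = (1 + |z|²)^{1/2}. -/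
open scoped BigOperators

noncomputable def epderiv {n : ℕ} (j : Fin n) (F : EuclideanSpace ℝ (Fin n) → ℝ) :
    EuclideanSpace ℝ (Fin n) → ℝ :=
  fun x => fderiv ℝ F x (EuclideanSpace.single j 1)

noncomputable def emderiv {n : ℕ} (β : Fin n → ℕ) (F : EuclideanSpace ℝ (Fin n) → ℝ) :
    EuclideanSpace ℝ (Fin n) → ℝ :=
  (List.finRange n).foldr (fun j G => (epderiv j)^[β j] G) F

/-- The spatial gradient `∇_x V`. -/
noncomputable def gradV {n : ℕ} (V : ℝ → EuclideanSpace ℝ (Fin n) → ℝ) (t : ℝ)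
    (x : EuclideanSpace ℝ (Fin n)) : EuclideanSpace ℝ (Fin n) :=
  WithLp.toLp 2 (fun j => fderiv ℝ (V t) x (EuclideanSpace.single j 1))


/-- The Japanese bracket `⟨z⟩ = (1 + |z|²)^{1/2}`. -/
noncomputable def jb {n : ℕ} (z : EuclideanSpace ℝ (Fin n)) : ℝ :=
  Real.sqrt (1 + ‖z‖ ^ 2)

lemma foldr_single_notmem {n : ℕ} (j : Fin n) (l : List (Fin n)) (F : EuclideanSpace ℝ (Fin n) → ℝ)
    (h : j ∉ l) :
    l.foldr (fun i G => (epderiv i)^[if i = j then 1 else 0] G) F = F := by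
  induction l with
  | nil => rfl
  | cons i l ih =>
    simp only [List.mem_cons, not_or] at h
    have : i ≠ j := fun e => h.1 e.symm
    simp [List.foldr_cons, this, ih h.2]

lemma foldr_single_mem {n : ℕ} (j : Fin n) (l : List (Fin n)) (F : EuclideanSpace ℝ (Fin n) → ℝ)
    (hnd : l.Nodup) (hj : j ∈ l) :
    l.foldr (fun i G => (epderiv i)^[if i = j then 1 else 0] G) F = epderiv j F := by
  induction l with
  | nil => simp at hj
  | cons i l ih =>
    rcases List.mem_cons.mp hj with h | h
    · have hj' : j ∉ l := by
        subst h; exact (List.nodup_cons.mp hnd).1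
      subst h
      simp [List.foldr_cons, foldr_single_notmem j l F hj']
    · have : i ≠ j := by
        rintro rfl; exact (List.nodup_cons.mp hnd).1 h
      simp [List.foldr_cons, this, ih (List.nodup_cons.mp hnd).2 h]

lemma jb_nonneg {n : ℕ} (z : EuclideanSpace ℝ (Fin n)) : 0 ≤ jb z := Real.sqrt_nonneg _

lemma one_le_jb {n : ℕ} (z : EuclideanSpace ℝ (Fin n)) : 1 ≤ jb z := by
  rw [jb]
  calc (1:ℝ) = Real.sqrt 1 := by simp
    _ ≤ Real.sqrt (1 + ‖z‖ ^ 2) := Real.sqrt_le_sqrt (by nlinarith [sq_nonneg ‖z‖])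

lemma jb_add_le {n : ℕ} (a b : EuclideanSpace ℝ (Fin n)) :
    jb (a + b) ≤ Real.sqrt 2 * jb a * jb b := by
  have h1 : ‖a + b‖ ≤ ‖a‖ + ‖b‖ := norm_add_le a b
  have h2 : (1 + ‖a + b‖ ^ 2) ≤ 2 * ((1 + ‖a‖ ^ 2) * (1 + ‖b‖ ^ 2)) := by
    nlinarith [norm_nonneg (a + b), norm_nonneg a, norm_nonneg b, sq_nonneg (‖a‖ - ‖b‖),
      sq_nonneg (‖a‖ * ‖b‖)]
  calc jb (a + b) ≤ Real.sqrt (2 * ((1 + ‖a‖ ^ 2) * (1 + ‖b‖ ^ 2))) := Real.sqrt_le_sqrt h2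
    _ = Real.sqrt 2 * jb a * jb b := by
        rw [Real.sqrt_mul (by norm_num), Real.sqrt_mul (by positivity), jb, jb, mul_assoc]

lemma jb_le {n : ℕ} (z : EuclideanSpace ℝ (Fin n)) : jb z ≤ 1 + ‖z‖ := by
  rw [jb, show (1:ℝ) + ‖z‖ = Real.sqrt ((1 + ‖z‖)^2) by
    rw [Real.sqrt_sq (by positivity)]]
  exact Real.sqrt_le_sqrt (by nlinarith [norm_nonneg z])

theorem stmt2 (n : ℕ) (V : ℝ → EuclideanSpace ℝ (Fin n) → ℝ)
    (hV : ContDiff ℝ (⊤ : ℕ∞) (fun p : ℝ × EuclideanSpace ℝ (Fin n) => V p.1 p.2))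
    (hbd : ∀ α : Fin n → ℕ, 1 ≤ ∑ j, α j →
      ∃ C > 0, ∀ (t : ℝ) (x : EuclideanSpace ℝ (Fin n)), |emderiv α (V t) x| ≤ C)
    (f g : ℝ → ℝ → EuclideanSpace ℝ (Fin n) → EuclideanSpace ℝ (Fin n) →
      EuclideanSpace ℝ (Fin n))
    (hf : ∀ s t x ξ, HasDerivAt (fun s' => f s' t x ξ) (g s t x ξ) s)
    (hg : ∀ s t x ξ, HasDerivAt (fun s' => g s' t x ξ) (-(gradV V s (f s t x ξ))) s)
    (hf0 : ∀ t x ξ, f t t x ξ = x) (hg0 : ∀ t x ξ, g t t x ξ = ξ) :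
    ∃ C₁ > 0, ∀ (s t : ℝ) (x ξ y : EuclideanSpace ℝ (Fin n)),
      jb (y - x + (t - s) • ξ) ≤ C₁ * (1 + |t - s| ^ 2) * jb (y - f s t x ξ) := by
  -- componentwise bound on the gradient
  have key : ∀ j : Fin n, ∃ C > 0, ∀ (t : ℝ) x, |gradV V t x j| ≤ C := by
    intro j
    obtain ⟨C, hCpos, hC⟩ := hbd (fun i => if i = j then 1 else 0)
      (by simp [Finset.sum_ite_eq'])
    refine ⟨C, hCpos, fun t x => ?_⟩
    have hemd : emderiv (fun i => if i = j then 1 else 0) (V t) = epderiv j (V t) :=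
      foldr_single_mem j (List.finRange n) (V t) (List.nodup_finRange n)
        (List.mem_finRange j)
    have := hC t x
    rw [hemd] at this
    exact this
  choose C hCpos hC using key
  set M : ℝ := ∑ j, C j with hM
  have hM0 : 0 ≤ M := Finset.sum_nonneg fun j _ => (hCpos j).le
  -- bound on the gradient norm
  have hgrad : ∀ (t : ℝ) x, ‖gradV V t x‖ ≤ M := by
    intro t x
    rw [EuclideanSpace.norm_eq]
    have h1 : ∑ i, ‖gradV V t x i‖ ^ 2 ≤ M ^ 2 := by
      calc ∑ i, ‖gradV V t x i‖ ^ 2 ≤ ∑ i, (C i) ^ 2 := by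
            refine Finset.sum_le_sum fun i _ => ?_
            have := hC i t x
            have h0 : ‖gradV V t x i‖ = |gradV V t x i| := rfl
            rw [h0]
            nlinarith [abs_nonneg (gradV V t x i), (hCpos i).le]
        _ ≤ M ^ 2 := Finset.sum_sq_le_sq_sum_of_nonneg fun i _ => (hCpos i).le
    calc Real.sqrt (∑ i, ‖gradV V t x i‖ ^ 2) ≤ Real.sqrt (M ^ 2) := Real.sqrt_le_sqrt h1
      _ = M := Real.sqrt_sq hM0
  -- g is M-Lipschitz in s
  have hgLip : ∀ (s t : ℝ) x ξ, ‖g s t x ξ - ξ‖ ≤ M * |s - t| := by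
    intro s t x ξ
    have := Convex.norm_image_sub_le_of_norm_hasDerivWithin_le
      (f := fun s' => g s' t x ξ) (f' := fun s' => -(gradV V s' (f s' t x ξ)))
      (s := Set.univ) (C := M)
      (fun σ _ => (hg σ t x ξ).hasDerivWithinAt)
      (fun σ _ => by rw [norm_neg]; exact hgrad σ _)
      convex_univ (Set.mem_univ t) (Set.mem_univ s)
    rw [hg0 t x ξ] at this
    simpa [Real.norm_eq_abs] using this
  -- f s - x - (s-t)•ξ has norm ≤ M |s-t|^2
  have hfbd : ∀ (s t : ℝ) x ξ, ‖f s t x ξ - x - (s - t) • ξ‖ ≤ M * |s - t| ^ 2 := by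
    intro s t x ξ
    set h : ℝ → EuclideanSpace ℝ (Fin n) := fun σ => f σ t x ξ - x - (σ - t) • ξ with hh
    have hderiv : ∀ σ : ℝ, HasDerivAt h (g σ t x ξ - ξ) σ := by
      intro σ
      have h1 : HasDerivAt (fun σ : ℝ => (σ - t) • ξ) ξ σ := by
        have := ((hasDerivAt_id σ).sub_const t).smul_const ξ
        simpa using this
      exact ((hf σ t x ξ).sub_const x).sub h1
    have hmvt := Convex.norm_image_sub_le_of_norm_hasDerivWithin_le
      (f := h) (f' := fun σ => g σ t x ξ - ξ) (s := Set.uIcc t s) (C := M * |s - t|)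
      (fun σ _ => (hderiv σ).hasDerivWithinAt)
      (fun σ hσ => by
        have h1 := hgLip σ t x ξ
        have h2 : |σ - t| ≤ |s - t| := by
          rcases Set.mem_uIcc.mp hσ with ⟨ha, hb⟩ | ⟨ha, hb⟩ <;> rw [abs_le] <;>
            constructor <;> cases abs_cases (s - t) <;> linarith [abs_nonneg (s - t)]
        calc ‖g σ t x ξ - ξ‖ ≤ M * |σ - t| := h1
          _ ≤ M * |s - t| := by nlinarith
        )
      (convex_uIcc t s) Set.left_mem_uIcc Set.right_mem_uIcc
    have hht : h t = 0 := by simp [hh, hf0]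
    rw [hht, sub_zero, Real.norm_eq_abs] at hmvt
    calc ‖h s‖ ≤ M * |s - t| * |s - t| := hmvt
      _ = M * |s - t| ^ 2 := by ring
  -- conclude
  refine ⟨Real.sqrt 2 * max 1 M, by positivity, fun s t x ξ y => ?_⟩
  have hsplit : y - x + (t - s) • ξ = (y - f s t x ξ) + (f s t x ξ - x - (s - t) • ξ) := by
    rw [sub_smul, sub_smul]; abel
  have h1 := jb_add_le (y - f s t x ξ) (f s t x ξ - x - (s - t) • ξ)
  have h2 : jb (f s t x ξ - x - (s - t) • ξ) ≤ max 1 M * (1 + |t - s| ^ 2) := by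
    calc jb (f s t x ξ - x - (s - t) • ξ) ≤ 1 + ‖f s t x ξ - x - (s - t) • ξ‖ := jb_le _
      _ ≤ 1 + M * |s - t| ^ 2 := by linarith [hfbd s t x ξ]
      _ ≤ max 1 M * (1 + |t - s| ^ 2) := by
          rw [abs_sub_comm t s]
          have hm1 : (1:ℝ) ≤ max 1 M := le_max_left _ _
          have hm2 : M ≤ max 1 M := le_max_right _ _
          nlinarith [sq_nonneg (|s - t|)]
  calc jb (y - x + (t - s) • ξ)
      = jb ((y - f s t x ξ) + (f s t x ξ - x - (s - t) • ξ)) := by rw [hsplit]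
    _ ≤ Real.sqrt 2 * jb (y - f s t x ξ) * jb (f s t x ξ - x - (s - t) • ξ) := jb_add_le _ _
    _ ≤ Real.sqrt 2 * jb (y - f s t x ξ) * (max 1 M * (1 + |t - s| ^ 2)) := by
        exact mul_le_mul_of_nonneg_left h2
          (mul_nonneg (Real.sqrt_nonneg 2) (jb_nonneg _))
    _ = Real.sqrt 2 * max 1 M * (1 + |t - s| ^ 2) * jb (y - f s t x ξ) := by ring
end

section
/- Let V : ℝ × ℝⁿ → ℝ be smooth such that for every multi-index α with |α| ≥ 1 there exists C_α with |∂_x^α V(t,x)| ≤ C_α. Let (f(s;t,x,ξ), g(s;t,x,ξ)) solve f' = g, g' = −∇_x V(s,f) with f(t) = x, g(t) = ξ. Then there exists C₂ > 0 such that for all η, ξ ∈ ℝⁿ and all s, t ∈ ℝ, ⟨η − ξ⟩ ≤ C₂ (1 + |t−s|) ⟨η − g(s;t,x,ξ)⟩. -/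
open scoped BigOperators

lemma foldr_no_j {n : ℕ} (j : Fin n) (F : EuclideanSpace ℝ (Fin n) → ℝ)
    (l : List (Fin n)) (hj : j ∉ l) :
    l.foldr (fun i G => (epderiv i)^[(Pi.single j 1 : Fin n → ℕ) i] G) F = F := by
  induction l with
  | nil => rfl
  | cons a l ih =>
    simp only [List.mem_cons, not_or] at hj
    rw [List.foldr_cons, ih hj.2]
    have : (Pi.single j 1 : Fin n → ℕ) a = 0 := Pi.single_eq_of_ne (Ne.symm hj.1) 1
    rw [this, Function.iterate_zero_apply]

lemma foldr_single {n : ℕ} (j : Fin n) (F : EuclideanSpace ℝ (Fin n) → ℝ)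
    (l : List (Fin n)) (hnd : l.Nodup) (hj : j ∈ l) :
    l.foldr (fun i G => (epderiv i)^[(Pi.single j 1 : Fin n → ℕ) i] G) F = epderiv j F := by
  induction l with
  | nil => simp at hj
  | cons a l ih =>
    rcases List.mem_cons.mp hj with h | h
    · subst h
      have hjl : j ∉ l := (List.nodup_cons.mp hnd).1
      rw [List.foldr_cons, foldr_no_j j F l hjl, Pi.single_eq_same,
        Function.iterate_one]
    · have ha : a ≠ j := by
        rintro rfl; exact (List.nodup_cons.mp hnd).1 h
      rw [List.foldr_cons, ih (List.nodup_cons.mp hnd).2 h]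
      have : (Pi.single j 1 : Fin n → ℕ) a = 0 := Pi.single_eq_of_ne ha 1
      rw [this, Function.iterate_zero_apply]

lemma emderiv_single {n : ℕ} (j : Fin n) (F : EuclideanSpace ℝ (Fin n) → ℝ) :
    emderiv (Pi.single j 1) F = epderiv j F :=
  foldr_single j F _ (List.nodup_finRange n) (List.mem_finRange j)

theorem stmt3 (n : ℕ) (V : ℝ → EuclideanSpace ℝ (Fin n) → ℝ)
    (hV : ContDiff ℝ (⊤ : ℕ∞) (fun p : ℝ × EuclideanSpace ℝ (Fin n) => V p.1 p.2))
    (hbd : ∀ α : Fin n → ℕ, 1 ≤ ∑ j, α j →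
      ∃ C > 0, ∀ (t : ℝ) (x : EuclideanSpace ℝ (Fin n)), |emderiv α (V t) x| ≤ C)
    (f g : ℝ → ℝ → EuclideanSpace ℝ (Fin n) → EuclideanSpace ℝ (Fin n) →
      EuclideanSpace ℝ (Fin n))
    (hf : ∀ s t x ξ, HasDerivAt (fun s' => f s' t x ξ) (g s t x ξ) s)
    (hg : ∀ s t x ξ, HasDerivAt (fun s' => g s' t x ξ) (-(gradV V s (f s t x ξ))) s)
    (hf0 : ∀ t x ξ, f t t x ξ = x) (hg0 : ∀ t x ξ, g t t x ξ = ξ) :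
    ∃ C₂ > 0, ∀ (s t : ℝ) (x ξ η : EuclideanSpace ℝ (Fin n)),
      jb (η - ξ) ≤ C₂ * (1 + |t - s|) * jb (η - g s t x ξ) := by
  -- componentwise bounds on gradV
  have hcomp : ∀ j : Fin n, ∃ C > 0, ∀ (t : ℝ) (y : EuclideanSpace ℝ (Fin n)),
      |gradV V t y j| ≤ C := by
    intro j
    obtain ⟨C, hC, hCb⟩ := hbd (Pi.single j 1) (by simp)
    exact ⟨C, hC, fun t y => by
      have := hCb t y
      rw [emderiv_single] at this; exact this⟩
  choose Cf hCfpos hCf using hcomp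
  set B : ℝ := Real.sqrt (∑ j, Cf j ^ 2) with hB
  have hB0 : 0 ≤ B := Real.sqrt_nonneg _
  have hgradbd : ∀ (t : ℝ) (y : EuclideanSpace ℝ (Fin n)), ‖gradV V t y‖ ≤ B := by
    intro t y
    rw [EuclideanSpace.norm_eq]
    apply Real.sqrt_le_sqrt
    apply Finset.sum_le_sum
    intro j _
    have := hCf j t y
    calc ‖gradV V t y j‖ ^ 2 = |gradV V t y j| ^ 2 := by rw [Real.norm_eq_abs]
      _ ≤ Cf j ^ 2 := by
          apply pow_le_pow_left₀ (abs_nonneg _) this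
  -- key estimate: ‖g s t x ξ - ξ‖ ≤ B * |s - t|
  have hkey : ∀ (s t : ℝ) (x ξ : EuclideanSpace ℝ (Fin n)),
      ‖g s t x ξ - ξ‖ ≤ B * |t - s| := by
    intro s t x ξ
    have := Convex.norm_image_sub_le_of_norm_hasDerivWithin_le
      (f := fun s' => g s' t x ξ)
      (f' := fun s' => -(gradV V s' (f s' t x ξ))) (C := B)
      (fun u _ => (hg u t x ξ).hasDerivWithinAt)
      (fun u _ => by simpa using hgradbd u (f u t x ξ))
      convex_univ (Set.mem_univ t) (Set.mem_univ s)
    have h2 : ‖g s t x ξ - g t t x ξ‖ ≤ B * ‖s - t‖ := this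
    rw [hg0 t x ξ] at h2
    calc ‖g s t x ξ - ξ‖ ≤ B * ‖s - t‖ := h2
      _ = B * |t - s| := by rw [Real.norm_eq_abs, abs_sub_comm]
  refine ⟨B + 2, by linarith, fun s t x ξ η => ?_⟩
  set J := jb (η - g s t x ξ) with hJ
  have hJ1 : 1 ≤ J := by
    have h := Real.sqrt_le_sqrt
      (show (1:ℝ) ≤ 1 + ‖η - g s t x ξ‖ ^ 2 by nlinarith [sq_nonneg ‖η - g s t x ξ‖])
    rwa [Real.sqrt_one] at h
  have hJn : ‖η - g s t x ξ‖ ≤ J := by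
    have h := Real.sqrt_le_sqrt (show ‖η - g s t x ξ‖ ^ 2 ≤ 1 + ‖η - g s t x ξ‖ ^ 2 by linarith)
    rwa [Real.sqrt_sq (norm_nonneg _)] at h
  have hub : jb (η - ξ) ≤ 1 + ‖η - ξ‖ := by
    have h := Real.sqrt_le_sqrt
      (show 1 + ‖η - ξ‖ ^ 2 ≤ (1 + ‖η - ξ‖) ^ 2 by nlinarith [norm_nonneg (η - ξ)])
    rwa [Real.sqrt_sq (add_nonneg zero_le_one (norm_nonneg _))] at h
  have htri : ‖η - ξ‖ ≤ ‖η - g s t x ξ‖ + ‖g s t x ξ - ξ‖ := by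
    simpa using norm_sub_le_norm_sub_add_norm_sub η (g s t x ξ) ξ
  have hts : (0:ℝ) ≤ |t - s| := abs_nonneg _
  have hk := hkey s t x ξ
  have hJ0 : (0:ℝ) ≤ J := le_trans zero_le_one hJ1
  have e1 : B * |t - s| ≤ B * |t - s| * J :=
    le_mul_of_one_le_right (mul_nonneg hB0 hts) hJ1
  have step1 : jb (η - ξ) ≤ (2 + B * |t - s|) * J := by nlinarith
  have step2 : (2 + B * |t - s|) * J ≤ (B + 2) * (1 + |t - s|) * J := by
    apply mul_le_mul_of_nonneg_right _ hJ0
    nlinarith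
  linarith
end
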